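/- arXiv:1704.06509 — 4 statements merged into one kernel-verified Lean document; each statement's English description precedes it below -/
import Mathlib

section
/- Let n \ge 4 be an integer and let t be a real number with t > n and t \ge 3 + \sqrt{8}. Then t - n/(t - n) \le (t + 3 + \sqrt{(t-3)^2 - 8})/2. -/
/-- For an integer `n ≥ 4` and real `t > n` with `t ≥ 3 + √8`:
condition (iii)' is at least as strong as (ii)', i.e.
`t - n/(t-n) ≤ (t + 3 + √((t-3)² - 8))/2`. -/
theorem cond_iii_implies_ii (n : ℕ) (hn : 4 ≤ n) (t : ℝ)
    (hnt : (n : ℝ) < t) (ht : 3 + Real.sqrt 8 ≤ t) :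
    t - (n : ℝ) / (t - n) ≤ (t + 3 + Real.sqrt ((t - 3) ^ 2 - 8)) / 2 := by
  set N : ℝ := (n : ℝ) with hN
  have hN4 : (4 : ℝ) ≤ N := by rw [hN]; exact_mod_cast hn
  have hu : (0 : ℝ) < t - N := by linarith
  have hs8 : Real.sqrt 8 ^ 2 = 8 := Real.sq_sqrt (by norm_num)
  have hs8nn : 0 ≤ Real.sqrt 8 := Real.sqrt_nonneg 8
  have hD : 0 ≤ (t - 3) ^ 2 - 8 := by nlinarith
  have hsD : 0 ≤ Real.sqrt ((t - 3) ^ 2 - 8) := Real.sqrt_nonneg _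
  by_cases hc : (t - 3) * (t - N) ≤ 2 * N
  · have h1 : (t - 3) / 2 ≤ N / (t - N) := by
      rw [div_le_div_iff₀ (by norm_num) hu]
      linarith
    linarith
  · push_neg at hc
    have hx : 0 ≤ t - 3 - 2 * N / (t - N) := by
      have : 2 * N / (t - N) ≤ t - 3 := by
        rw [div_le_iff₀ hu]; nlinarith
      linarith
    have hkey : (t - 3 - 2 * N / (t - N)) ^ 2 ≤ (t - 3) ^ 2 - 8 := by
      have heq : t - 3 - 2 * N / (t - N) = ((t - 3) * (t - N) - 2 * N) / (t - N) := by
        field_simp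
      rw [heq, div_pow, div_le_iff₀ (by positivity)]
      -- reduces to: N² + 2u² ≤ N(t-3)u where u = t-N, t-3 = u+N-3
      nlinarith [mul_nonneg (by linarith : (0:ℝ) ≤ N - 2) (by nlinarith : (0:ℝ) ≤ (t-3)*(t-N) - 2*N),
        mul_nonneg (by linarith : (0:ℝ) ≤ N - 3) hu.le,
        mul_nonneg (by linarith : (0:ℝ) ≤ N) (mul_nonneg (by linarith : (0:ℝ) ≤ N - 4) (by norm_num : (0:ℝ) ≤ 1)),
        sq_nonneg (t - N)]
    have hle : t - 3 - 2 * N / (t - N) ≤ Real.sqrt ((t - 3) ^ 2 - 8) := by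
      calc t - 3 - 2 * N / (t - N) = Real.sqrt ((t - 3 - 2 * N / (t - N)) ^ 2) :=
            (Real.sqrt_sq hx).symm
        _ ≤ Real.sqrt ((t - 3) ^ 2 - 8) := Real.sqrt_le_sqrt hkey
    have hdiv : 2 * N / (t - N) = 2 * (N / (t - N)) := by ring
    linarith
end

section
/- Let \varphi : \mathbb{R} \to \mathbb{C} be a smooth function with compact support, and define u(\xi) = \varphi(\xi) for \xi \le 0 and u(\xi) = 0 for \xi > 0. Let f be the inverse Fourier transform of u (which exists pointwise since u is integrable). Then f is continuous and bounded, there is a constant C > 0 with |f(x)| \le C/(1 + |x|) for all real x, and consequently f belongs to L^p(\mathbb{R}) for every p with 1 < p \le \infty. -/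
open MeasureTheory FourierTransform ENNReal

open Real Set intervalIntegral

/-- Quantitative core of the pv(1/x) example: if `φ` is a smooth compactly
supported function on `ℝ` and `u` equals `φ` on `(-∞, 0]` and `0` on `(0, ∞)`,
then the inverse Fourier transform `f = 𝓕⁻ u` is continuous and bounded,
satisfies `|f x| ≤ C/(1 + |x|)` for some `C > 0`, and belongs to `L^p(ℝ)`
for every `1 < p ≤ ∞`. -/
theorem heaviside_cutoff_inverse_fourier (φ : ℝ → ℂ)
    (hφ : ContDiff ℝ (⊤ : ℕ∞) φ) (hsupp : HasCompactSupport φ)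
    (u : ℝ → ℂ) (hu : ∀ ξ : ℝ, u ξ = if ξ ≤ 0 then φ ξ else 0)
    (f : ℝ → ℂ) (hf : f = (𝓕⁻ u : ℝ → ℂ)) :
    Continuous f ∧ (∃ M : ℝ, ∀ x : ℝ, ‖f x‖ ≤ M) ∧
    (∃ C : ℝ, 0 < C ∧ ∀ x : ℝ, ‖f x‖ ≤ C / (1 + |x|)) ∧
    (∀ p : ℝ≥0∞, 1 < p → MemLp f p (volume : Measure ℝ)) := by
  have hφc : Continuous φ := hφ.continuous
  have hφint : Integrable φ := hφc.integrable_of_hasCompactSupport hsupp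
  have hui : u = Set.indicator (Set.Iic 0) φ := by
    funext ξ
    simp only [hu, Set.indicator_apply, Set.mem_Iic]
  have hInt : Integrable u := by
    rw [hui]; exact hφint.indicator measurableSet_Iic
  -- continuity
  have hcont : Continuous f := by
    rw [hf]
    refine VectorFourier.fourierIntegral_continuous Real.continuous_fourierChar ?_ hInt
    simp only [LinearMap.neg_apply, innerₗ_apply_apply]
    exact continuous_inner.neg
  -- boundedness
  set M : ℝ := ∫ v, ‖u v‖ with hM
  have hM0 : 0 ≤ M := integral_nonneg fun v => norm_nonneg _
  have hbound : ∀ x : ℝ, ‖f x‖ ≤ M := by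
    intro x
    rw [hf]
    exact VectorFourier.norm_fourierIntegral_le_integral_norm _ _ _ _ _
  -- compact support radius
  obtain ⟨R, hR0, hRb⟩ := hsupp.isBounded.subset_ball_lt 0 0
  have hφzero : ∀ ξ : ℝ, ξ ≤ -R → φ ξ = 0 := by
    intro ξ hξ
    apply image_eq_zero_of_notMem_tsupport
    intro h
    have := hRb h
    rw [Metric.mem_ball, Real.dist_eq, sub_zero] at this
    have := neg_abs_le ξ
    linarith
  -- representation as interval integral
  have hrepr : ∀ x : ℝ, f x = ∫ v in (-R)..0,
      Complex.exp ((2 * π * v * x : ℝ) * Complex.I) * φ v := by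
    intro x
    rw [hf, Real.fourierInv_eq_fourier_neg,
      Real.fourier_real_eq_integral_exp_smul]
    have h1 : (fun v : ℝ => Complex.exp ((-2 * π * v * (-x) : ℝ) * Complex.I) • u v)
        = Set.indicator (Set.Iic 0)
          (fun v => Complex.exp ((2 * π * v * x : ℝ) * Complex.I) * φ v) := by
      funext v
      by_cases hv : v ≤ 0 <;>
        simp [hu v, hv, Set.indicator_apply, Set.mem_Iic, smul_eq_mul]
    rw [h1, MeasureTheory.integral_indicator measurableSet_Iic,
      MeasureTheory.setIntegral_eq_of_subset_of_ae_diff_eq_zero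
        measurableSet_Iic.nullMeasurableSet Set.Ioc_subset_Iic_self
        (Filter.Eventually.of_forall ?_),
      ← intervalIntegral.integral_of_le (by linarith : -R ≤ (0:ℝ))]
    intro v hv
    simp only [Set.mem_diff, Set.mem_Iic, Set.mem_Ioc, not_and] at hv
    have hvR : v ≤ -R := by
      by_contra h
      push_neg at h
      exact (hv.2 h) hv.1
    simp [hφzero v hvR]
  -- decay
  set B : ℝ := ∫ v in (-R)..0, ‖deriv φ v‖ with hB
  have hB0 : 0 ≤ B :=
    intervalIntegral.integral_nonneg (by linarith) (fun v _ => norm_nonneg _)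
  set C₁ : ℝ := (‖φ 0‖ + B) / (2 * π) with hC₁def
  have hC₁0 : 0 ≤ C₁ := by positivity
  have hdecay : ∀ x : ℝ, x ≠ 0 → ‖f x‖ ≤ C₁ / |x| := by
    intro x hx
    set c : ℂ := (2 * π * x : ℝ) * Complex.I with hc
    have hc0 : c ≠ 0 := by
      apply mul_ne_zero _ Complex.I_ne_zero
      exact_mod_cast mul_ne_zero (by positivity : (2:ℝ) * π ≠ 0) hx
    have hcv : ∀ v : ℝ, ((2 * π * v * x : ℝ) : ℂ) * Complex.I = c * v := by
      intro v; rw [hc]; push_cast; ring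
    have hnormc : ‖c‖ = 2 * π * |x| := by
      rw [hc, norm_mul, Complex.norm_I, mul_one, Complex.norm_real, Real.norm_eq_abs,
        abs_mul, abs_of_pos (by positivity : (0:ℝ) < 2 * π)]
    have hnexp : ∀ v : ℝ, ‖Complex.exp (c * v)‖ = 1 := by
      intro v
      rw [← hcv v, Complex.norm_exp_ofReal_mul_I]
    have D : ∀ v : ℝ, HasDerivAt (fun y : ℝ => Complex.exp (c * y) / c)
        (Complex.exp (c * v)) v := by
      intro v
      rw [← mul_div_cancel_right₀ (Complex.exp (c * v)) hc0]
      apply ((Complex.hasDerivAt_exp _).comp v _).div_const c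
      simpa only [mul_one, id_eq] using ((hasDerivAt_id (v : ℂ)).const_mul c).comp_ofReal
    have hibp := intervalIntegral.integral_mul_deriv_eq_deriv_mul
        (a := -R) (b := 0) (u := φ) (v := fun y : ℝ => Complex.exp (c * y) / c)
        (u' := deriv φ) (v' := fun v : ℝ => Complex.exp (c * v))
        (fun v _ => (hφ.differentiable (by simp) v).hasDerivAt)
        (fun v _ => D v)
        ((hφ.continuous_deriv (by simp)).intervalIntegrable _ _)
        (((Complex.continuous_exp.comp
          (continuous_const.mul Complex.continuous_ofReal)).intervalIntegrable _ _))
    have hcong : Set.EqOn (fun v : ℝ => Complex.exp ((2 * π * v * x : ℝ) * Complex.I) * φ v)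
        (fun v : ℝ => φ v * Complex.exp (c * v)) (Set.uIcc (-R) 0) := by
      intro v _
      simp only
      rw [hcv v, mul_comm]
    have hfx : f x = φ 0 * (1 / c)
        - ∫ v in (-R)..0, deriv φ v * (Complex.exp (c * v) / c) := by
      rw [hrepr x, intervalIntegral.integral_congr hcong, hibp, hφzero (-R) le_rfl]
      simp
    have hnorm2 : ‖∫ v in (-R)..0, deriv φ v * (Complex.exp (c * v) / c)‖
        ≤ B / ‖c‖ := by
      calc ‖∫ v in (-R)..0, deriv φ v * (Complex.exp (c * v) / c)‖
          ≤ ∫ v in (-R)..0, ‖deriv φ v * (Complex.exp (c * v) / c)‖ :=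
            intervalIntegral.norm_integral_le_integral_norm (by linarith)
        _ = ∫ v in (-R)..0, ‖deriv φ v‖ * (1 / ‖c‖) := by
            apply intervalIntegral.integral_congr
            intro v _
            simp only [norm_mul, norm_div, hnexp v, one_div]
        _ = B / ‖c‖ := by
            rw [intervalIntegral.integral_mul_const]
            ring
    calc ‖f x‖ ≤ ‖φ 0 * (1 / c)‖ + ‖∫ v in (-R)..0, deriv φ v * (Complex.exp (c * v) / c)‖ := by
          rw [hfx]; exact norm_sub_le _ _
      _ ≤ ‖φ 0‖ / ‖c‖ + B / ‖c‖ := by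
          rw [norm_mul, norm_div, norm_one]
          exact add_le_add (le_of_eq (by ring)) hnorm2
      _ = C₁ / |x| := by
          rw [hnormc, hC₁def]
          rw [div_div]
          rw [← add_div]
    -- end hdecay
  set C : ℝ := 2 * max M C₁ + 1 with hCdef
  have hC0 : 0 < C := by positivity
  have hdecayC : ∀ x : ℝ, ‖f x‖ ≤ C / (1 + |x|) := by
    intro x
    rcases le_or_gt (|x|) 1 with h1 | h1
    · have h2 : 1 + |x| ≤ 2 := by linarith
      have : M ≤ C / 2 := by
        rw [hCdef]
        have := le_max_left M C₁
        rw [le_div_iff₀ (by norm_num)]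
        linarith
      calc ‖f x‖ ≤ M := hbound x
        _ ≤ C / 2 := this
        _ ≤ C / (1 + |x|) := by
            apply div_le_div_of_nonneg_left hC0.le (by positivity) h2
    · have hx : x ≠ 0 := by
        intro h; rw [h] at h1; simp at h1; linarith
      have h3 : C₁ / |x| ≤ C / (1 + |x|) := by
        rw [div_le_div_iff₀ (by positivity) (by positivity)]
        have h4 := le_max_right M C₁
        have h5 : C₁ * 1 ≤ C₁ * |x| := by
          apply mul_le_mul_of_nonneg_left h1.le hC₁0
        nlinarith
      exact (hdecay x hx).trans h3
  refine ⟨hcont, ⟨M, hbound⟩, ⟨C, hC0, hdecayC⟩, ?_⟩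
  -- Lp membership
  intro p hp
  have hmeas : AEStronglyMeasurable f (volume : Measure ℝ) := hcont.aestronglyMeasurable
  rcases eq_or_ne p ∞ with rfl | hptop
  · exact memLp_top_of_bound hmeas M (Filter.Eventually.of_forall hbound)
  · have hp0 : p ≠ 0 := by
      intro h; rw [h] at hp; exact absurd hp (by simp)
    have ht1 : 1 < p.toReal := by
      have := ENNReal.toReal_strict_mono hptop hp
      simpa using this
    have ht0 : 0 ≤ p.toReal := by linarith
    have key := (memLp_norm_rpow_iff (p := p) (q := p) hmeas hp0 hptop).1
    rw [ENNReal.div_self hp0 hptop] at key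
    apply key
    rw [memLp_one_iff_integrable]
    have hg : Integrable (fun x : ℝ => C ^ p.toReal * (1 + ‖x‖) ^ (-p.toReal)) := by
      exact (integrable_one_add_norm (by simpa using ht1)).const_mul _
    apply hg.mono'
    · exact (hcont.norm.rpow_const (fun x => Or.inr ht0)).aestronglyMeasurable
    · apply Filter.Eventually.of_forall
      intro x
      have h1 : (0:ℝ) < 1 + ‖x‖ := by positivity
      rw [Real.norm_eq_abs, Real.abs_rpow_of_nonneg (norm_nonneg _),
        abs_of_nonneg (norm_nonneg _)]
      calc ‖f x‖ ^ p.toReal ≤ (C / (1 + |x|)) ^ p.toReal := by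
            apply Real.rpow_le_rpow (norm_nonneg _) _ ht0
            simpa [Real.norm_eq_abs] using hdecayC x
        _ = C ^ p.toReal * (1 + ‖x‖) ^ (-p.toReal) := by
            rw [Real.div_rpow hC0.le (by positivity), Real.rpow_neg (by positivity),
              div_eq_mul_inv, Real.norm_eq_abs]
end

section
/- Let u > 0 and s be real numbers, and set t = 2u. Consider the conditions (i) s > 2 + \max(u - 1, t - 2); (ii) if u \le 1 then s > 0, and if u > 1 then s > t - \min(2, 1/(u-1)); (iii) if t \ge 3 + \sqrt{8} then s > (t + 3 + \sqrt{(t-3)^2 - 8})/2 or s < (t + 3 - \sqrt{(t-3)^2 - 8})/2. Then (i), (ii) and (iii) hold jointly if and only if s > \max(u + 1, 2u). Moreover, the set \{(u, s) \in \mathbb{R}^2 : u > 0 and s > \max(u+1, 2u)\} is convex. -/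
/-- The parameter domain for `n = r = 2` in coordinates `u = 1/p`, `t = 2u`:
conditions (i)–(iii) of the Direct Regularity Theorem hold jointly iff
`s > max (u + 1) (2u)`; moreover this domain is convex. -/
theorem domain_n2_r2 :
    (∀ u s : ℝ, 0 < u →
      ((s > 2 + max (u - 1) (2 * u - 2) ∧
        ((u ≤ 1 → s > 0) ∧
         (1 < u → s > 2 * u - min 2 (1 / (u - 1)))) ∧
        (3 + Real.sqrt 8 ≤ 2 * u →
          s > (2 * u + 3 + Real.sqrt ((2 * u - 3) ^ 2 - 8)) / 2 ∨
          s < (2 * u + 3 - Real.sqrt ((2 * u - 3) ^ 2 - 8)) / 2)) ↔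
        s > max (u + 1) (2 * u))) ∧
    Convex ℝ {P : ℝ × ℝ | 0 < P.1 ∧ P.2 > max (P.1 + 1) (2 * P.1)} := by
  constructor
  · intro u s hu
    constructor
    · rintro ⟨h1, _, _⟩
      rw [gt_iff_lt, max_lt_iff]
      constructor
      · nlinarith [le_max_left (u - 1) (2 * u - 2)]
      · nlinarith [le_max_right (u - 1) (2 * u - 2)]
    · intro hs
      rw [gt_iff_lt, max_lt_iff] at hs
      obtain ⟨hs1, hs2⟩ := hs
      refine ⟨?_, ⟨fun _ => by linarith, fun hu1 => ?_⟩, fun ht => ?_⟩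
      · rcases le_total (u - 1) (2 * u - 2) with h | h
        · rw [max_eq_right h]; linarith
        · rw [max_eq_left h]; linarith
      · have hm : (0:ℝ) ≤ min 2 (1 / (u - 1)) :=
          le_min (by norm_num) (le_of_lt (div_pos one_pos (by linarith)))
        linarith
      · left
        have h8 : (0:ℝ) ≤ Real.sqrt 8 := Real.sqrt_nonneg 8
        have h3 : (0:ℝ) ≤ 2 * u - 3 := by linarith
        have hD : Real.sqrt ((2 * u - 3) ^ 2 - 8) ≤ 2 * u - 3 := by
          calc Real.sqrt ((2 * u - 3) ^ 2 - 8) ≤ Real.sqrt ((2 * u - 3) ^ 2) :=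
                Real.sqrt_le_sqrt (by linarith)
            _ = 2 * u - 3 := Real.sqrt_sq h3
        linarith
  · intro x hx y hy a b ha hb hab
    simp only [Set.mem_setOf_eq, gt_iff_lt, max_lt_iff] at hx hy ⊢
    obtain ⟨hx1, hx2, hx3⟩ := hx
    obtain ⟨hy1, hy2, hy3⟩ := hy
    simp only [Prod.fst_add, Prod.snd_add, Prod.smul_fst, Prod.smul_snd, smul_eq_mul]
    rcases eq_or_lt_of_le ha with rfl | ha'
    · have hb1 : b = 1 := by linarith
      subst hb1; simp [hy1, hy2, hy3]
    · refine ⟨?_, ?_, ?_⟩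
      · nlinarith [mul_nonneg hb hy1.le]
      · nlinarith [mul_lt_mul_of_pos_left hx2 ha', mul_le_mul_of_nonneg_left hy2.le hb]
      · nlinarith [mul_lt_mul_of_pos_left hx3 ha', mul_le_mul_of_nonneg_left hy3.le hb]
end

section
/- Let n \ge 2 be an integer. Then the set D \subset \mathbb{R}^2 of pairs (u, s) with u > 0 satisfying all of: (i) s > 1 + \max(u - 1, nu - n); (ii) if u \le 1 then s > 0, and if u > 1 then s > nu - \min(n, 1/(u-1)); (iii) if nu \ge 3 + \sqrt{8} then s > (nu + 3 + \sqrt{(nu-3)^2 - 8})/2 or s < (nu + 3 - \sqrt{(nu-3)^2 - 8})/2; is not convex, i.e. there exist points P, Q in D whose midpoint is not in D. -/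
/-!
Condition (iii) says exactly that `(u, s)` lies off the closed region between the two
branches of the hyperbola `(s - 3)(s - n u) = -2`. The point `(1/n, 3/4)` lies below the
lower branch and the point `(40/n, 40)` on the diagonal `s = n u` lies above the upper one,
while their midpoint `(41/(2n), 163/8)` has `(s - 3)(s - n u) = -139/64 < -2`, i.e. it falls
between the branches.
-/

open Real

noncomputable def regularityDomain (n : ℝ) : Set (ℝ × ℝ) :=
  {R | 0 < R.1 ∧
    1 + max (R.1 - 1) (n * R.1 - n) < R.2 ∧
    ((R.1 ≤ 1 → 0 < R.2) ∧ (1 < R.1 → n * R.1 - min n (1 / (R.1 - 1)) < R.2)) ∧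
    (3 + √8 ≤ n * R.1 →
      (n * R.1 + 3 + √((n * R.1 - 3) ^ 2 - 8)) / 2 < R.2 ∨
      R.2 < (n * R.1 + 3 - √((n * R.1 - 3) ^ 2 - 8)) / 2)}

lemma sqrt_eight_le_three : √8 ≤ 3 := by
  rw [sqrt_le_left (by norm_num)]
  norm_num

/-- The roots `(t + 3 ± √((t - 3)² - 8)) / 2` are those of `s² - (t + 3) s + 3t + 2`. -/
lemma outside_hyperbola_roots_iff {t s : ℝ} (ht : 3 + √8 ≤ t) :
    ((t + 3 + √((t - 3) ^ 2 - 8)) / 2 < s ∨ s < (t + 3 - √((t - 3) ^ 2 - 8)) / 2) ↔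
      -2 < (s - 3) * (s - t) := by
  set r := √((t - 3) ^ 2 - 8)
  have hdisc : 0 ≤ (t - 3) ^ 2 - 8 := by
    have h8 : (√8) ^ 2 = 8 := sq_sqrt (by norm_num)
    nlinarith [sqrt_nonneg 8]
  have hr : r ^ 2 = (t - 3) ^ 2 - 8 := sq_sqrt hdisc
  have hfactor : (s - 3) * (s - t) + 2 =
      (s - (t + 3 + r) / 2) * (s - (t + 3 - r) / 2) := by
    linear_combination hr / 4
  have hr0 : 0 ≤ r := sqrt_nonneg _
  rw [← sub_pos (b := -2), sub_neg_eq_add, hfactor, mul_pos_iff]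
  constructor
  · rintro (h | h)
    · exact .inl ⟨by linarith, by linarith⟩
    · exact .inr ⟨by linarith, by linarith⟩
  · rintro (⟨h, -⟩ | ⟨-, h⟩)
    · exact .inl (by linarith)
    · exact .inr (by linarith)

lemma not_mem_regularityDomain_of_between_branches {n u s : ℝ} (ht : 3 + √8 ≤ n * u)
    (hs : (s - 3) * (s - n * u) ≤ -2) : (u, s) ∉ regularityDomain n := by
  rintro ⟨-, -, -, hyp⟩
  exact (outside_hyperbola_roots_iff ht).mp (hyp ht) |>.not_ge hs

lemma mem_regularityDomain_of_left {n : ℝ} (hn : 2 ≤ n) : (1 / n, 3 / 4) ∈ regularityDomain n := by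
  have hu : 1 / n ≤ 1 / 2 := one_div_le_one_div_of_le two_pos hn
  have hnu : n * (1 / n) = 1 := mul_one_div_cancel (by positivity)
  refine ⟨by positivity, ?_, ⟨fun _ => by norm_num, fun h => absurd h (by linarith)⟩, ?_⟩
  · rw [hnu, ← lt_sub_iff_add_lt', max_lt_iff]
    constructor <;> linarith
  · intro ht
    linarith [sqrt_nonneg 8]

lemma mem_regularityDomain_of_diagonal {n T : ℝ} (hn : 2 ≤ n) (hT : 0 < T) :
    (T / n, T) ∈ regularityDomain n := by
  have hnu : n * (T / n) = T := mul_div_cancel₀ T (by positivity)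
  have hu : T / n < T := div_lt_self hT (by linarith)
  refine ⟨by positivity, ?_, ⟨fun _ => hT, fun h => ?_⟩, fun ht => ?_⟩
  · rw [hnu, ← lt_sub_iff_add_lt', max_lt_iff]
    constructor <;> linarith
  · have : 0 < min n (1 / (T / n - 1)) := lt_min (by linarith) (one_div_pos.mpr (by linarith))
    linarith
  · rw [hnu] at ht ⊢
    rw [outside_hyperbola_roots_iff ht]
    norm_num

/-- For `n ≥ 2` the parameter domain of the Direct Regularity Theorem for a
boundary operator of class `r = 1`, in coordinates `(u, s)` with `u = 1/p`,
is not convex: there are two points of the domain whose midpoint lies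
outside it. -/
theorem domain_not_convex (n : ℕ) (hn : 2 ≤ n) :
    ∃ P Q : ℝ × ℝ,
      P ∈ {R : ℝ × ℝ | 0 < R.1 ∧
        R.2 > 1 + max (R.1 - 1) ((n : ℝ) * R.1 - n) ∧
        ((R.1 ≤ 1 → R.2 > 0) ∧
         (1 < R.1 → R.2 > (n : ℝ) * R.1 - min (n : ℝ) (1 / (R.1 - 1)))) ∧
        (3 + Real.sqrt 8 ≤ (n : ℝ) * R.1 →
          R.2 > ((n : ℝ) * R.1 + 3 +
            Real.sqrt (((n : ℝ) * R.1 - 3) ^ 2 - 8)) / 2 ∨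
          R.2 < ((n : ℝ) * R.1 + 3 -
            Real.sqrt (((n : ℝ) * R.1 - 3) ^ 2 - 8)) / 2)} ∧
      Q ∈ {R : ℝ × ℝ | 0 < R.1 ∧
        R.2 > 1 + max (R.1 - 1) ((n : ℝ) * R.1 - n) ∧
        ((R.1 ≤ 1 → R.2 > 0) ∧
         (1 < R.1 → R.2 > (n : ℝ) * R.1 - min (n : ℝ) (1 / (R.1 - 1)))) ∧
        (3 + Real.sqrt 8 ≤ (n : ℝ) * R.1 →
          R.2 > ((n : ℝ) * R.1 + 3 +
            Real.sqrt (((n : ℝ) * R.1 - 3) ^ 2 - 8)) / 2 ∨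
          R.2 < ((n : ℝ) * R.1 + 3 -
            Real.sqrt (((n : ℝ) * R.1 - 3) ^ 2 - 8)) / 2)} ∧
      (1 / 2 : ℝ) • P + (1 / 2 : ℝ) • Q ∉ {R : ℝ × ℝ | 0 < R.1 ∧
        R.2 > 1 + max (R.1 - 1) ((n : ℝ) * R.1 - n) ∧
        ((R.1 ≤ 1 → R.2 > 0) ∧
         (1 < R.1 → R.2 > (n : ℝ) * R.1 - min (n : ℝ) (1 / (R.1 - 1)))) ∧
        (3 + Real.sqrt 8 ≤ (n : ℝ) * R.1 →
          R.2 > ((n : ℝ) * R.1 + 3 +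
            Real.sqrt (((n : ℝ) * R.1 - 3) ^ 2 - 8)) / 2 ∨
          R.2 < ((n : ℝ) * R.1 + 3 -
            Real.sqrt (((n : ℝ) * R.1 - 3) ^ 2 - 8)) / 2)} := by
  have hn' : (2 : ℝ) ≤ n := by exact_mod_cast hn
  have hmid : (1 / 2 : ℝ) • (1 / (n : ℝ), (3 / 4 : ℝ)) + (1 / 2 : ℝ) • (40 / (n : ℝ), (40 : ℝ)) =
      ((41 : ℝ) / (2 * n), (163 / 8 : ℝ)) := by
    ext <;> simp only [Prod.fst_add, Prod.snd_add, Prod.smul_fst, Prod.smul_snd, smul_eq_mul]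
      <;> ring
  have hnu : (n : ℝ) * (41 / (2 * n)) = 41 / 2 := by field_simp
  refine ⟨(1 / n, 3 / 4), (40 / n, 40), mem_regularityDomain_of_left hn',
    mem_regularityDomain_of_diagonal hn' (by norm_num), ?_⟩
  change _ ∉ regularityDomain n
  rw [hmid]
  apply not_mem_regularityDomain_of_between_branches <;> rw [hnu]
  · linarith [sqrt_eight_le_three]
  · norm_num
end
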